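/- arXiv:2008.11487 — 3 statements merged into one kernel-verified Lean document; each statement's English description precedes it below -/
import Mathlib

section
/- Suppose T ∈ ℝ^{k̂×k} has full row rank k̂, ker T = V_N, there is a map φ̂ : {1,…,k̂} → {1,…,d} with T_{ij} = 0 whenever φ̂(i) ≠ φ(j), and e^T = ê^T T where ê ∈ ℝ^{k̂} is the all-ones vector. Let Q̂ ∈ ℝ^{k̂×k̂} be the unique solution of Q̂ T = T Q (which exists since V_N is Q-invariant), let ρ̂ = T ρ, and let Î_u ∈ ℝ^{k̂×k̂} be the diagonal 0/1 matrix of φ̂. Then for every n ≥ 1, every pair of words w = (w_1,…,w_n), w' = (w'_1,…,w'_n) ∈ {1,…,d}^n and every z ∈ {1,…,d}: Σ_{i : φ(i) = z} [e^T I_{w_n} Q I_{w_{n−1}} Q ⋯ I_{w_1} Q]_i · [ρ^T I_{w'_n} Q^T ⋯ I_{w'_1} Q^T]_i = Σ_{j : φ̂(j) = z} [ê^T Î_{w_n} Q̂ Î_{w_{n−1}} Q̂ ⋯ Î_{w_1} Q̂]_j · [ρ̂^T Î_{w'_n} Q̂^T ⋯ Î_{w'_1} Q̂^T]_j. That is,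 the third-order tensor A ⊗ B ⊗ C built from (e, Q, ρ, φ) equals the tensor Â ⊗ B̂ ⊗ Ĉ built from (ê, Q̂, ρ̂, φ̂). -/
/-!
`T` intertwines the two systems: the zero pattern gives `Î_u T = T I_u`, and `Q̂ T = T Q` by
definition of `Q̂`, so `T` intertwines every word in them and their transposes. Writing a tensor
entry as `eᵀ M ρ` with `M = chain_Q w · I_z · (chain_{Qᵀ} w')ᵀ`, one gets
`êᵀ M̂ (T ρ) = êᵀ T M ρ = eᵀ M ρ`.
-/

open Matrix

noncomputable def diagInd (k d : ℕ) (φ : Fin k → Fin d) (u : Fin d) :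
    Matrix (Fin k) (Fin k) ℝ :=
  Matrix.diagonal fun i => if φ i = u then (1 : ℝ) else 0

noncomputable def chain (k d : ℕ) (Q : Matrix (Fin k) (Fin k) ℝ)
    (φ : Fin k → Fin d) : List (Fin d) → Matrix (Fin k) (Fin k) ℝ
  | [] => 1
  | u :: l => diagInd k d φ u * Q * chain k d Q φ l

noncomputable def reachSpace (k d : ℕ) (Q : Matrix (Fin k) (Fin k) ℝ)
    (φ : Fin k → Fin d) (ρ : Fin k → ℝ) : Submodule ℝ (Fin k → ℝ) :=
  Submodule.span ℝ { v | ∃ (l : List (Fin d)) (u0 : Fin d),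
    v = (chain k d Q φ l * diagInd k d φ u0) *ᵥ ρ }

noncomputable def nullSpace (k d : ℕ) (Q : Matrix (Fin k) (Fin k) ℝ)
    (φ : Fin k → Fin d) : Submodule ℝ (Fin k → ℝ) where
  carrier := { v | ∀ (l : List (Fin d)) (u0 : Fin d),
    (1 : Fin k → ℝ) ⬝ᵥ ((chain k d Q φ l * diagInd k d φ u0) *ᵥ v) = 0 }
  add_mem' := by
    intro a b ha hb l u0
    simp [Matrix.mulVec_add, dotProduct_add, ha l u0, hb l u0]
  zero_mem' := by intro l u0; simp
  smul_mem' := by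
    intro c a ha l u0
    simp [Matrix.mulVec_smul, dotProduct_smul, ha l u0]

theorem Matrix.mul_mul_eq_mul_mul_of_intertwine {m n α : Type*} [Fintype m] [Fintype n]
    [Semiring α] {A C : Matrix m m α} {B D : Matrix n n α}
    {T : Matrix m n α} (hAB : A * T = T * B) (hCD : C * T = T * D) :
    A * C * T = T * (B * D) := by
  rw [Matrix.mul_assoc, hCD, ← Matrix.mul_assoc, hAB, Matrix.mul_assoc]

theorem diagInd_transpose (k d : ℕ) (φ : Fin k → Fin d) (u : Fin d) :
    (diagInd k d φ u)ᵀ = diagInd k d φ u := by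
  simp [diagInd]

theorem diagInd_mul_eq_mul_diagInd {k d khat : ℕ} {φ : Fin k → Fin d} {φhat : Fin khat → Fin d}
    {T : Matrix (Fin khat) (Fin k) ℝ} (hpattern : ∀ i j, φhat i ≠ φ j → T i j = 0) (u : Fin d) :
    diagInd khat d φhat u * T = T * diagInd k d φ u := by
  ext i j
  simp only [diagInd, Matrix.diagonal_mul, Matrix.mul_diagonal]
  by_cases h : φhat i = φ j
  · rw [h, mul_comm]
  · rw [hpattern i j h, mul_zero, zero_mul]

section Chain

variable {k d khat : ℕ} {φ : Fin k → Fin d} {φhat : Fin khat → Fin d}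
  {Q : Matrix (Fin k) (Fin k) ℝ} {Qhat : Matrix (Fin khat) (Fin khat) ℝ}
  {T : Matrix (Fin khat) (Fin k) ℝ}

theorem chain_mul_eq_mul_chain (hQT : Qhat * T = T * Q)
    (hdiag : ∀ u, diagInd khat d φhat u * T = T * diagInd k d φ u) (l : List (Fin d)) :
    chain khat d Qhat φhat l * T = T * chain k d Q φ l := by
  induction l with
  | nil => simp [chain]
  | cons u l ih =>
    exact Matrix.mul_mul_eq_mul_mul_of_intertwine
      (Matrix.mul_mul_eq_mul_mul_of_intertwine (hdiag u) hQT) ih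

theorem chain_transpose_transpose_mul_eq_mul (hQT : Qhat * T = T * Q)
    (hdiag : ∀ u, diagInd khat d φhat u * T = T * diagInd k d φ u) (l : List (Fin d)) :
    (chain khat d Qhatᵀ φhat l)ᵀ * T = T * (chain k d Qᵀ φ l)ᵀ := by
  induction l with
  | nil => simp [chain]
  | cons u l ih =>
    simp only [chain, Matrix.transpose_mul, Matrix.transpose_transpose, diagInd_transpose]
    exact Matrix.mul_mul_eq_mul_mul_of_intertwine ih
      (Matrix.mul_mul_eq_mul_mul_of_intertwine hQT (hdiag u))

end Chain

theorem sum_filter_vecMul_mul_vecMul {m d : ℕ} (ψ : Fin m → Fin d) (z : Fin d)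
    (a r : Fin m → ℝ) (A B : Matrix (Fin m) (Fin m) ℝ) :
    ∑ i ∈ Finset.univ.filter (fun i => ψ i = z), (a ᵥ* A) i * (r ᵥ* B) i =
      (a ᵥ* (A * diagInd m d ψ z * Bᵀ)) ⬝ᵥ r := by
  rw [← Matrix.vecMul_vecMul, ← Matrix.vecMul_vecMul, ← Matrix.dotProduct_mulVec,
    Matrix.mulVec_transpose, Finset.sum_filter]
  simp only [diagInd, dotProduct, Matrix.vecMul_diagonal]
  refine Finset.sum_congr rfl fun i _ => ?_
  split_ifs <;> simp

theorem tensor_reduction_null_general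
    (k d khat : ℕ) (φ : Fin k → Fin d)
    (Q : Matrix (Fin k) (Fin k) ℝ)
    (ρ : Fin k → ℝ)
    (T : Matrix (Fin khat) (Fin k) ℝ) (φhat : Fin khat → Fin d)
    (hpattern : ∀ (i : Fin khat) (j : Fin k), φhat i ≠ φ j → T i j = 0)
    (hsum : (1 : Fin khat → ℝ) ᵥ* T = (1 : Fin k → ℝ))
    (Qhat : Matrix (Fin khat) (Fin khat) ℝ) (ρhat : Fin khat → ℝ)
    (hQT : Qhat * T = T * Q)
    (hρT : ρhat = T *ᵥ ρ) :
    ∀ (w w' : List (Fin d)), w ≠ [] → w' ≠ [] → w.length = w'.length →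
      ∀ z : Fin d,
        ∑ i ∈ Finset.univ.filter (fun i : Fin k => φ i = z),
          ((1 : Fin k → ℝ) ᵥ* chain k d Q φ w) i * (ρ ᵥ* chain k d Qᵀ φ w') i =
        ∑ j ∈ Finset.univ.filter (fun j : Fin khat => φhat j = z),
          ((1 : Fin khat → ℝ) ᵥ* chain khat d Qhat φhat w) j *
            (ρhat ᵥ* chain khat d Qhatᵀ φhat w') j := by
  intro w w' _ _ _ z
  have hdiag := diagInd_mul_eq_mul_diagInd hpattern
  have hM : chain khat d Qhat φhat w * diagInd khat d φhat z * (chain khat d Qhatᵀ φhat w')ᵀ * T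
      = T * (chain k d Q φ w * diagInd k d φ z * (chain k d Qᵀ φ w')ᵀ) :=
    Matrix.mul_mul_eq_mul_mul_of_intertwine
      (Matrix.mul_mul_eq_mul_mul_of_intertwine (chain_mul_eq_mul_chain hQT hdiag w) (hdiag z))
      (chain_transpose_transpose_mul_eq_mul hQT hdiag w')
  rw [sum_filter_vecMul_mul_vecMul, sum_filter_vecMul_mul_vecMul, hρT,
    Matrix.dotProduct_mulVec, Matrix.vecMul_vecMul, hM, ← Matrix.vecMul_vecMul 1 T, hsum]

/-- Theorem 6, reduction by the null space: if `T` is a full-row-rank matrix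
with `ker T = V_N`, the zero pattern of `φ̂, φ`, and `eᵀ = êᵀ T`, and `Q̂` solves `Q̂ T = T Q`,
`ρ̂ = T ρ`, then the third-order tensors built from `(e, Q, ρ, φ)` and `(ê, Q̂, ρ̂, φ̂)`
coincide. -/
theorem tensor_reduction_null
    (k d khat : ℕ) (hk : 0 < k) (hd : 0 < d) (φ : Fin k → Fin d)
    (Q : Matrix (Fin k) (Fin k) ℝ)
    (hQ : (1 : Fin k → ℝ) ᵥ* Q = 1)
    (ρ : Fin k → ℝ) (hρ : Q *ᵥ ρ = ρ)
    (T : Matrix (Fin khat) (Fin k) ℝ) (φhat : Fin khat → Fin d)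
    (hrank : T.rank = khat)
    (hker : LinearMap.ker T.mulVecLin = nullSpace k d Q φ)
    (hpattern : ∀ (i : Fin khat) (j : Fin k), φhat i ≠ φ j → T i j = 0)
    (hsum : (1 : Fin khat → ℝ) ᵥ* T = (1 : Fin k → ℝ))
    (Qhat : Matrix (Fin khat) (Fin khat) ℝ) (ρhat : Fin khat → ℝ)
    (hQT : Qhat * T = T * Q)
    (hρT : ρhat = T *ᵥ ρ) :
    ∀ (w w' : List (Fin d)), w ≠ [] → w' ≠ [] → w.length = w'.length →
      ∀ z : Fin d,
        ∑ i ∈ Finset.univ.filter (fun i : Fin k => φ i = z),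
          ((1 : Fin k → ℝ) ᵥ* chain k d Q φ w) i * (ρ ᵥ* chain k d Qᵀ φ w') i =
        ∑ j ∈ Finset.univ.filter (fun j : Fin khat => φhat j = z),
          ((1 : Fin khat → ℝ) ᵥ* chain khat d Qhat φhat w) j *
            (ρhat ᵥ* chain khat d Qhatᵀ φhat w') j :=
  tensor_reduction_null_general k d khat φ Q ρ T φhat hpattern hsum Qhat ρhat hQT hρT
end

section
/- Assume the hypotheses of the reachable-subspace reduction: T_R ∈ ℝ^{k×k̂_R} has full column rank with column space V_R, T_{R,ij} = 0 whenever φ(i) ≠ φ̂_R(j) for a map φ̂_R : {1,…,k̂_R} → {1,…,d}, and e^T T_R = ê_R^T where ê_R ∈ ℝ^{k̂_R} is all-ones; Q̂_R ∈ ℝ^{k̂_R×k̂_R} and ρ̂_R ∈ ℝ^{k̂_R} are the unique solutions of Q T_R = T_R Q̂_R and ρ = T_R ρ̂_R. Further, let T ∈ ℝ^{k̂×k̂_R} have full row rank, with a map φ̂ : {1,…,k̂} → {1,…,d} such that T_{ij} = 0 whenever φ̂(i) ≠ φ̂_R(j), ê_R^T = ê^T T where ê ∈ ℝ^{k̂}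 is all-ones, and ker T is Q̂_R-invariant (Q̂_R · ker T ⊆ ker T). Let Q̂ ∈ ℝ^{k̂×k̂} be the unique solution of Q̂ T = T Q̂_R, let ρ̂ = T ρ̂_R, and let Î_u ∈ ℝ^{k̂×k̂} be the diagonal 0/1 matrix of φ̂. Then for every n ≥ 1, every pair of words w = (w_1,…,w_n), w' = (w'_1,…,w'_n) ∈ {1,…,d}^n and every z ∈ {1,…,d}: Σ_{i : φ(i) = z} [e^T I_{w_n} Q ⋯ I_{w_1} Q]_i · [ρ^T I_{w'_n} Q^T ⋯ I_{w'_1} Q^T]_i = Σ_{j : φ̂(j) = z} [ê^T Î_{w_n} Q̂ ⋯ Î_{w_1} Q̂]_j · [ρ̂^T Î_{w'_n} Q̂^T ⋯ Î_{w'_1} Q̂^T]_j. That is, the third-order tensor A ⊗ B ⊗ C built from (e, Q, ρ, φ) equals the tensor Â ⊗ B̂ ⊗ Ĉ built from (ê, Q̂, ρ̂, φ̂), whose number of rank-one terms is k̂. -/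
open Matrix

/-!
Both tensors equal the tensor of the intermediate model `(ê_R, Q̂_R, ρ̂_R, φ̂_R)`. If `A S = S B`
and `S` vanishes off matching colours, then `S` intertwines every `I_u`, hence every product
`I_{u_n} A ⋯ I_{u_1} A` with its `B`-counterpart, and likewise for the products built from `Aᵀ`
and `Bᵀ`. A tensor entry is the bilinear form `eᵀ M_w I_z N_{w'}ᵀ ρ` in these products, so once
`eᵀ S = eᵀ` the entry for `(A, S r)` equals the entry for `(B, r)`. Apply this with `S = T_R` and
with `S = T`.
-/

noncomputable def tensorEntry {m : ℕ} (d : ℕ) (A : Matrix (Fin m) (Fin m) ℝ)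
    (ψ : Fin m → Fin d) (r : Fin m → ℝ) (w w' : List (Fin d)) (z : Fin d) : ℝ :=
  ∑ i ∈ Finset.univ.filter (fun i : Fin m => ψ i = z),
    ((1 : Fin m → ℝ) ᵥ* chain m d A ψ w) i * (r ᵥ* chain m d Aᵀ ψ w') i

section Intertwining

variable {m n d : ℕ} {A : Matrix (Fin m) (Fin m) ℝ} {B : Matrix (Fin n) (Fin n) ℝ}
  {S : Matrix (Fin m) (Fin n) ℝ} {ψ : Fin m → Fin d} {χ : Fin n → Fin d}

lemma diagInd_mul_eq_mul_diagInd_s17 (hS : ∀ i j, ψ i ≠ χ j → S i j = 0) (u : Fin d) :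
    diagInd m d ψ u * S = S * diagInd n d χ u := by
  ext i j
  simp only [diagInd, diagonal_mul, mul_diagonal]
  by_cases h : ψ i = χ j
  · rw [h]; ring
  · rw [hS i j h]; ring

lemma chain_mul_eq_mul_chain_s17 (hAB : A * S = S * B) (hS : ∀ i j, ψ i ≠ χ j → S i j = 0) :
    ∀ l : List (Fin d), chain m d A ψ l * S = S * chain n d B χ l
  | [] => by simp [chain]
  | u :: l => by
    rw [chain, chain, Matrix.mul_assoc, chain_mul_eq_mul_chain_s17 hAB hS l, ← Matrix.mul_assoc,
      Matrix.mul_assoc _ A, hAB, ← Matrix.mul_assoc, diagInd_mul_eq_mul_diagInd_s17 hS u]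
    simp only [Matrix.mul_assoc]

lemma chain_transpose_transpose_mul_eq_mul_s17 (hAB : A * S = S * B)
    (hS : ∀ i j, ψ i ≠ χ j → S i j = 0) (l : List (Fin d)) :
    (chain m d Aᵀ ψ l)ᵀ * S = S * (chain n d Bᵀ χ l)ᵀ := by
  have hBA : Bᵀ * Sᵀ = Sᵀ * Aᵀ := by rw [← transpose_mul, ← transpose_mul, hAB]
  have h := congrArg transpose
    (chain_mul_eq_mul_chain_s17 hBA (fun i j h => hS j i (Ne.symm h)) l)
  simpa only [transpose_mul, transpose_transpose] using h.symm

lemma tensorEntry_eq_dotProduct (A : Matrix (Fin m) (Fin m) ℝ) (ψ : Fin m → Fin d)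
    (r : Fin m → ℝ) (w w' : List (Fin d)) (z : Fin d) :
    tensorEntry d A ψ r w w' z =
      1 ⬝ᵥ (chain m d A ψ w * diagInd m d ψ z * (chain m d Aᵀ ψ w')ᵀ) *ᵥ r := by
  rw [← mulVec_mulVec, dotProduct_mulVec, ← vecMul_vecMul,
    mulVec_transpose, tensorEntry, Finset.sum_filter, dotProduct]
  refine Finset.sum_congr rfl fun i _ => ?_
  simp only [diagInd, vecMul_diagonal]
  split_ifs <;> ring

lemma tensorEntry_mulVec (hAB : A * S = S * B) (hS : ∀ i j, ψ i ≠ χ j → S i j = 0)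
    (hsum : (1 : Fin m → ℝ) ᵥ* S = 1) (r : Fin n → ℝ) (w w' : List (Fin d)) (z : Fin d) :
    tensorEntry d A ψ (S *ᵥ r) w w' z = tensorEntry d B χ r w w' z := by
  have hM : chain m d A ψ w * diagInd m d ψ z * (chain m d Aᵀ ψ w')ᵀ * S =
      S * (chain n d B χ w * diagInd n d χ z * (chain n d Bᵀ χ w')ᵀ) := by
    rw [Matrix.mul_assoc _ (chain m d Aᵀ ψ w')ᵀ, chain_transpose_transpose_mul_eq_mul_s17 hAB hS,
      ← Matrix.mul_assoc, Matrix.mul_assoc (chain m d A ψ w), diagInd_mul_eq_mul_diagInd_s17 hS,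
      ← Matrix.mul_assoc, chain_mul_eq_mul_chain_s17 hAB hS]
    simp only [Matrix.mul_assoc]
  rw [tensorEntry_eq_dotProduct, tensorEntry_eq_dotProduct, mulVec_mulVec, hM, ← mulVec_mulVec,
    dotProduct_mulVec, hsum]

end Intertwining

theorem tensor_reduction_effective_general
    (k d kR khat : ℕ) (φ : Fin k → Fin d)
    (Q : Matrix (Fin k) (Fin k) ℝ)
    (ρ : Fin k → ℝ)
    (TR : Matrix (Fin k) (Fin kR) ℝ) (φR : Fin kR → Fin d)
    (hRpattern : ∀ (i : Fin k) (j : Fin kR), φ i ≠ φR j → TR i j = 0)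
    (hRsum : (1 : Fin k → ℝ) ᵥ* TR = 1)
    (QR : Matrix (Fin kR) (Fin kR) ℝ) (ρR : Fin kR → ℝ)
    (hQR : Q * TR = TR * QR)
    (hρR : ρ = TR *ᵥ ρR)
    (T : Matrix (Fin khat) (Fin kR) ℝ) (φhat : Fin khat → Fin d)
    (hTpattern : ∀ (i : Fin khat) (j : Fin kR), φhat i ≠ φR j → T i j = 0)
    (hTsum : (1 : Fin khat → ℝ) ᵥ* T = (1 : Fin kR → ℝ))
    (Qhat : Matrix (Fin khat) (Fin khat) ℝ) (ρhat : Fin khat → ℝ)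
    (hQhat : Qhat * T = T * QR)
    (hρhat : ρhat = T *ᵥ ρR) :
    ∀ (w w' : List (Fin d)), w ≠ [] → w' ≠ [] → w.length = w'.length →
      ∀ z : Fin d,
        ∑ i ∈ Finset.univ.filter (fun i : Fin k => φ i = z),
          ((1 : Fin k → ℝ) ᵥ* chain k d Q φ w) i * (ρ ᵥ* chain k d Qᵀ φ w') i =
        ∑ j ∈ Finset.univ.filter (fun j : Fin khat => φhat j = z),
          ((1 : Fin khat → ℝ) ᵥ* chain khat d Qhat φhat w) j *
            (ρhat ᵥ* chain khat d Qhatᵀ φhat w') j := by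
  intro w w' _ _ _ z
  change tensorEntry d Q φ ρ w w' z = tensorEntry d Qhat φhat ρhat w w' z
  rw [hρR, hρhat, tensorEntry_mulVec hQR hRpattern hRsum,
    tensorEntry_mulVec hQhat hTpattern hTsum]

/-- Theorem 7, reduction by the effective space: under the reachable-subspace
reduction hypotheses, together with a structured full-row-rank `T` whose kernel is
`Q̂_R`-invariant, and `Q̂, ρ̂` defined by `Q̂ T = T Q̂_R`, `ρ̂ = T ρ̂_R`, the third-order tensor
built from `(e, Q, ρ, φ)` equals the one built from `(ê, Q̂, ρ̂, φ̂)`. -/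
theorem tensor_reduction_effective
    (k d kR khat : ℕ) (hk : 0 < k) (hd : 0 < d) (φ : Fin k → Fin d)
    (Q : Matrix (Fin k) (Fin k) ℝ)
    (hQ : (1 : Fin k → ℝ) ᵥ* Q = 1)
    (ρ : Fin k → ℝ) (hρ : Q *ᵥ ρ = ρ)
    (TR : Matrix (Fin k) (Fin kR) ℝ) (φR : Fin kR → Fin d)
    (hRrank : TR.rank = kR)
    (hRrange : LinearMap.range TR.mulVecLin = reachSpace k d Q φ ρ)
    (hRpattern : ∀ (i : Fin k) (j : Fin kR), φ i ≠ φR j → TR i j = 0)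
    (hRsum : (1 : Fin k → ℝ) ᵥ* TR = 1)
    (QR : Matrix (Fin kR) (Fin kR) ℝ) (ρR : Fin kR → ℝ)
    (hQR : Q * TR = TR * QR)
    (hρR : ρ = TR *ᵥ ρR)
    (T : Matrix (Fin khat) (Fin kR) ℝ) (φhat : Fin khat → Fin d)
    (hTrank : T.rank = khat)
    (hTpattern : ∀ (i : Fin khat) (j : Fin kR), φhat i ≠ φR j → T i j = 0)
    (hTsum : (1 : Fin khat → ℝ) ᵥ* T = (1 : Fin kR → ℝ))
    (hTinv : ∀ v : Fin kR → ℝ, T *ᵥ v = 0 → T *ᵥ (QR *ᵥ v) = 0)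
    (Qhat : Matrix (Fin khat) (Fin khat) ℝ) (ρhat : Fin khat → ℝ)
    (hQhat : Qhat * T = T * QR)
    (hρhat : ρhat = T *ᵥ ρR) :
    ∀ (w w' : List (Fin d)), w ≠ [] → w' ≠ [] → w.length = w'.length →
      ∀ z : Fin d,
        ∑ i ∈ Finset.univ.filter (fun i : Fin k => φ i = z),
          ((1 : Fin k → ℝ) ᵥ* chain k d Q φ w) i * (ρ ᵥ* chain k d Qᵀ φ w') i =
        ∑ j ∈ Finset.univ.filter (fun j : Fin khat => φhat j = z),
          ((1 : Fin khat → ℝ) ᵥ* chain khat d Qhat φhat w) j *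
            (ρhat ᵥ* chain khat d Qhatᵀ φhat w') j :=
  tensor_reduction_effective_general k d kR khat φ Q ρ TR φR hRpattern hRsum QR ρR hQR hρR T φhat
    hTpattern hTsum Qhat ρhat hQhat hρhat
end

section
/- For a 'past' word p = (p_0,…,p_i) ∈ {1,…,d}^{i+1} (i ≥ 0) define θ(p) = I_{p_0} Q I_{p_1} Q ⋯ Q I_{p_i} ρ ∈ ℝ^k, and for a 'future' word f = (f_1,…,f_j) ∈ {1,…,d}^j (j ≥ 0) define the row vector γ(f)^T = e^T I_{f_j} Q I_{f_{j−1}} Q ⋯ I_{f_1} Q ∈ ℝ^{1×k} (with γ(f)^T = e^T when j = 0). Then for any finite lists of past words p^{(1)},…,p^{(M)} and future words f^{(1)},…,f^{(N)}, the M×N matrix H with entries H_{ab} = γ(f^{(b)})^T θ(p^{(a)}) has rank at most dim V_R − dim(V_R ∩ V_N). In particular, every finite submatrix of the generalized Hankel matrix of the realization has rank at most the dimension of the effective space (V_R + V_N)/V_N. -/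
/-!
The Hankel matrix is the matrix of the pairing between the vectors `θ(p) ∈ V_R` and the
functionals `γ(f)ᵀ`. Since the `I_u` sum to the identity, every `γ(f)ᵀ` is a sum of the
functionals defining `V_N`, so it vanishes on `V_N`. Hence the rows of the matrix lie in the
image of `V_R` under `v ↦ (γ(f⁽ᵇ⁾)ᵀ v)_b`, a map that kills `V_R ∩ V_N`; rank–nullity bounds
that image by `dim V_R − dim (V_R ∩ V_N)`.
-/

open Matrix

open Module

section RankBound

variable {K V W : Type*} [Field K] [AddCommGroup V] [Module K V] [AddCommGroup W] [Module K W]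

theorem Submodule.finrank_map_le_finrank_sub_finrank_inf [FiniteDimensional K V]
    (L : V →ₗ[K] W) {S T : Submodule K V} (hT : T ≤ LinearMap.ker L) :
    finrank K (S.map L) ≤ finrank K S - finrank K ↥(S ⊓ T) := by
  have hrank_nullity := (L.domRestrict S).finrank_range_add_finrank_ker
  have hinf_le_ker : finrank K ↥(S ⊓ T) ≤ finrank K (LinearMap.ker (L.domRestrict S)) := by
    rw [← (Submodule.comapSubtypeEquivOfLe (inf_le_left : S ⊓ T ≤ S)).finrank_eq]
    exact Submodule.finrank_mono fun x hx => hT (Submodule.mem_comap.mp hx).2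
  rw [LinearMap.range_domRestrict] at hrank_nullity
  omega

theorem Matrix.rank_of_dotProduct_le_finrank_sub_finrank_inf {m n ι : Type*} [Fintype m] [Fintype n] [Fintype ι]
    (γ : n → ι → K) (θ : m → ι → K) {S T : Submodule K (ι → K)} (hθ : ∀ a, θ a ∈ S)
    (hT : ∀ v ∈ T, ∀ b, γ b ⬝ᵥ v = 0) :
    (of fun a b => γ b ⬝ᵥ θ a).rank ≤ finrank K S - finrank K ↥(S ⊓ T) := by
  set L := (of γ).mulVecLin
  have hrows : Submodule.span K (Set.range (of fun a b => γ b ⬝ᵥ θ a).row) ≤ S.map L := by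
    rw [Submodule.span_le]
    rintro _ ⟨a, rfl⟩
    exact ⟨θ a, hθ a, rfl⟩
  have hT_ker : T ≤ LinearMap.ker L := fun v hv => funext (hT v hv)
  calc (of fun a b => γ b ⬝ᵥ θ a).rank
      ≤ finrank K (S.map L) := by
        rw [rank_eq_finrank_span_row]; exact Submodule.finrank_mono hrows
    _ ≤ finrank K S - finrank K ↥(S ⊓ T) :=
        Submodule.finrank_map_le_finrank_sub_finrank_inf L hT_ker

end RankBound

theorem sum_diagInd (k d : ℕ) (φ : Fin k → Fin d) : ∑ u, diagInd k d φ u = 1 := by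
  ext i j
  by_cases h : i = j <;> simp [diagInd, Matrix.sum_apply, one_apply, h]

theorem dotProduct_chain_mulVec_eq_zero_of_mem_nullSpace {k d : ℕ} {Q : Matrix (Fin k) (Fin k) ℝ}
    {φ : Fin k → Fin d} {v : Fin k → ℝ} (hv : v ∈ nullSpace k d Q φ) (l : List (Fin d)) :
    1 ⬝ᵥ (chain k d Q φ l *ᵥ v) = 0 := by
  rw [← mul_one (chain k d Q φ l), ← sum_diagInd k d φ, Finset.mul_sum, Matrix.sum_mulVec,
    dotProduct_sum]
  exact Finset.sum_eq_zero fun u _ => hv l u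

theorem hankel_rank_le_effective_dim_general
    (k d : ℕ) (φ : Fin k → Fin d)
    (Q : Matrix (Fin k) (Fin k) ℝ)
    (ρ : Fin k → ℝ) :
    ∀ (M N : ℕ) (pl : Fin M → List (Fin d)) (pu : Fin M → Fin d)
      (f : Fin N → List (Fin d)),
      (Matrix.of fun (a : Fin M) (b : Fin N) =>
          ((1 : Fin k → ℝ) ᵥ* chain k d Q φ (f b)) ⬝ᵥ
            ((chain k d Q φ (pl a) * diagInd k d φ (pu a)) *ᵥ ρ)).rank ≤
        Module.finrank ℝ (reachSpace k d Q φ ρ) -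
          Module.finrank ℝ ↥(reachSpace k d Q φ ρ ⊓ nullSpace k d Q φ) := by
  intro M N pl pu f
  refine Matrix.rank_of_dotProduct_le_finrank_sub_finrank_inf _ _ (fun a => Submodule.subset_span ⟨pl a, pu a, rfl⟩) ?_
  intro v hv b
  rw [← dotProduct_mulVec]
  exact dotProduct_chain_mulVec_eq_zero_of_mem_nullSpace hv (f b)

/-- every finite submatrix of the generalized Hankel matrix, with entries
`γ(f⁽ᵇ⁾)ᵀ θ(p⁽ᵃ⁾)` where `θ(p) = I_{p₀} Q ⋯ Q I_{pᵢ} ρ` ranges over past words and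
`γ(f)ᵀ = eᵀ I_{f_j} Q ⋯ I_{f₁} Q` over future words, has rank at most
`dim V_R − dim (V_R ∩ V_N)`, the dimension of the effective space. -/
theorem hankel_rank_le_effective_dim
    (k d : ℕ) (hk : 0 < k) (hd : 0 < d) (φ : Fin k → Fin d)
    (Q : Matrix (Fin k) (Fin k) ℝ)
    (hQ : (1 : Fin k → ℝ) ᵥ* Q = 1)
    (ρ : Fin k → ℝ) (hρ : Q *ᵥ ρ = ρ) :
    ∀ (M N : ℕ) (pl : Fin M → List (Fin d)) (pu : Fin M → Fin d)
      (f : Fin N → List (Fin d)),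
      (Matrix.of fun (a : Fin M) (b : Fin N) =>
          ((1 : Fin k → ℝ) ᵥ* chain k d Q φ (f b)) ⬝ᵥ
            ((chain k d Q φ (pl a) * diagInd k d φ (pu a)) *ᵥ ρ)).rank ≤
        Module.finrank ℝ (reachSpace k d Q φ ρ) -
          Module.finrank ℝ ↥(reachSpace k d Q φ ρ ⊓ nullSpace k d Q φ) :=
  hankel_rank_le_effective_dim_general k d φ Q ρ
end
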